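/- Under conditions (G1) and (G2), for every ξ > 0 one has K1(ξ) + ξ·K1'(ξ) ≥ (θ/(θ+1))·K1(ξ), where θ > 0 is the constant from condition (G2). -/

import Mathlib

/-! Since `s(ξ) g(s(ξ)) = ξ`, we have `ξ K1(ξ) = s(ξ)`, so `K1 + ξ K1'` is the derivative of the
inverse of `s ↦ s g(s)`, namely `1 / (g(s) + s g'(s))`. Condition (G2) says exactly that this is
at least `θ / (θ + 1) · 1 / g(s)`. -/

open Set Filter Topology

section RightInverse

variable {Φ sol : ℝ → ℝ} {ξ : ℝ}

theorem pos_of_rightInvOn (hΦ0 : Φ 0 = 0) (hmaps : MapsTo sol (Ioi 0) (Ici 0))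
    (hinv : RightInvOn sol Φ (Ioi 0)) (hξ : 0 < ξ) : 0 < sol ξ := by
  refine (hmaps hξ).lt_of_ne fun h => hξ.ne ?_
  rw [← hinv hξ, ← h, hΦ0]

theorem StrictMonoOn.monotoneOn_of_rightInvOn (hΦ : StrictMonoOn Φ (Ici 0))
    (hmaps : MapsTo sol (Ioi 0) (Ici 0)) (hinv : RightInvOn sol Φ (Ioi 0)) :
    MonotoneOn sol (Ioi 0) := fun x hx y hy hxy =>
  (hΦ.le_iff_le (hmaps hx) (hmaps hy)).mp (by rwa [hinv hx, hinv hy])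

theorem StrictMonoOn.Ioi_subset_image_of_rightInvOn (hΦ : StrictMonoOn Φ (Ici 0))
    (hΦ0 : Φ 0 = 0) (hmaps : MapsTo sol (Ioi 0) (Ici 0)) (hinv : RightInvOn sol Φ (Ioi 0)) :
    Ioi 0 ⊆ sol '' Ioi 0 := by
  intro t ht
  have ht' : t ∈ Ici 0 := Ioi_subset_Ici_self ht
  have hΦt : Φ t ∈ Ioi 0 := hΦ0 ▸ hΦ self_mem_Ici ht' ht
  exact ⟨Φ t, hΦt, hΦ.injOn (hmaps hΦt) ht' (hinv hΦt)⟩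

theorem StrictMonoOn.continuousAt_of_rightInvOn (hΦ : StrictMonoOn Φ (Ici 0)) (hΦ0 : Φ 0 = 0)
    (hmaps : MapsTo sol (Ioi 0) (Ici 0)) (hinv : RightInvOn sol Φ (Ioi 0)) (hξ : 0 < ξ) :
    ContinuousAt sol ξ :=
  continuousAt_of_monotoneOn_of_image_mem_nhds (hΦ.monotoneOn_of_rightInvOn hmaps hinv)
    (Ioi_mem_nhds hξ) (mem_of_superset (Ioi_mem_nhds (pos_of_rightInvOn hΦ0 hmaps hinv hξ))
      (hΦ.Ioi_subset_image_of_rightInvOn hΦ0 hmaps hinv))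

theorem StrictMonoOn.hasDerivAt_of_rightInvOn {Φ' : ℝ} (hΦ : StrictMonoOn Φ (Ici 0))
    (hΦ0 : Φ 0 = 0) (hmaps : MapsTo sol (Ioi 0) (Ici 0)) (hinv : RightInvOn sol Φ (Ioi 0))
    (hξ : 0 < ξ) (hΦ' : HasDerivAt Φ Φ' (sol ξ)) (hΦ'0 : Φ' ≠ 0) : HasDerivAt sol Φ'⁻¹ ξ :=
  hΦ'.of_local_left_inverse (hΦ.continuousAt_of_rightInvOn hΦ0 hmaps hinv hξ) hΦ'0
    (eventually_gt_nhds hξ |>.mono fun _ hx => hinv hx)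

end RightInverse

theorem monotoneOn_Ici_of_hasDerivAt_nonneg {g g' : ℝ → ℝ} {a : ℝ}
    (hg : ContinuousOn g (Ici a)) (hg' : ∀ s, a < s → HasDerivAt g (g' s) s)
    (hg'_nonneg : ∀ s, a < s → 0 ≤ g' s) : MonotoneOn g (Ici a) := by
  refine monotoneOn_of_hasDerivWithinAt_nonneg (f' := g') (convex_Ici a) hg (fun s hs => ?_) fun s hs => ?_
  · rw [interior_Ici] at hs ⊢
    exact (hg' s hs).hasDerivWithinAt
  · rw [interior_Ici] at hs
    exact hg'_nonneg s hs

theorem strictMonoOn_Ici_mul_self {g : ℝ → ℝ} (hg : MonotoneOn g (Ici 0)) (hg0 : 0 < g 0) :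
    StrictMonoOn (fun s => s * g s) (Ici 0) := fun a ha b hb hab =>
  calc a * g a < b * g a := mul_lt_mul_of_pos_right hab (hg0.trans_le (hg self_mem_Ici ha ha))
    _ ≤ b * g b := mul_le_mul_of_nonneg_left (hg ha hb hab.le) (le_trans ha hab.le)

theorem div_add_one_mul_inv_le_inv_add {θ G a : ℝ} (hθ : 0 ≤ θ) (hG : 0 < G) (ha : 0 ≤ a)
    (h : θ * a ≤ G) : θ / (θ + 1) * G⁻¹ ≤ (G + a)⁻¹ := by
  rw [div_mul_eq_mul_div, ← div_eq_mul_inv, div_div, div_le_iff₀ (by positivity), inv_mul_eq_div,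
    le_div_iff₀ (by positivity)]
  nlinarith

theorem K1_add_mul_deriv_ge_general
    (g g' sol K1 : ℝ → ℝ) (θ : ℝ)
    -- condition (G1)
    (hg_cont : ContinuousOn g (Set.Ici 0))
    (hg_deriv : ∀ s, 0 < s → HasDerivAt g (g' s) s)
    (hg'_nonneg : ∀ s, 0 < s → 0 ≤ g' s)
    (hg0 : 0 < g 0)
    -- condition (G2)
    (hθ : 0 < θ)
    (hG2 : ∀ s, 0 < s → θ * s * g' s ≤ g s)
    -- the implicit function s(ξ): the unique nonnegative solution of s·g(s) = ξ
    (hsol : ∀ ξ, 0 ≤ ξ → (0 ≤ sol ξ ∧ sol ξ * g (sol ξ) = ξ))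
    -- the Forchheimer coefficient
    (hK1 : ∀ ξ, 0 ≤ ξ → K1 ξ = 1 / g (sol ξ)) :
    ∀ ξ, 0 < ξ → ∀ k', HasDerivAt K1 k' ξ →
      θ / (θ + 1) * K1 ξ ≤ K1 ξ + ξ * k' := by
  intro ξ hξ k' hk'
  have hg_mono := monotoneOn_Ici_of_hasDerivAt_nonneg hg_cont hg_deriv hg'_nonneg
  have hg_pos : ∀ s, 0 ≤ s → 0 < g s := fun s hs => hg0.trans_le (hg_mono self_mem_Ici hs hs)
  have hΦ := strictMonoOn_Ici_mul_self hg_mono hg0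
  have hΦ0 : (fun s => s * g s) 0 = 0 := zero_mul _
  have hmaps : MapsTo sol (Ioi 0) (Ici 0) := fun x hx => (hsol x (le_of_lt hx)).1
  have hinv : RightInvOn sol (fun s => s * g s) (Ioi 0) := fun x hx => (hsol x (le_of_lt hx)).2
  set s := sol ξ
  have hs : 0 < s := pos_of_rightInvOn hΦ0 hmaps hinv hξ
  have hΦ' : HasDerivAt (fun s => s * g s) (g s + s * g' s) s :=
    ((hasDerivAt_id' s).mul (hg_deriv s hs)).congr_deriv (by ring)
  have hsg' : 0 ≤ s * g' s := mul_nonneg hs.le (hg'_nonneg s hs)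
  have hD : 0 < g s + s * g' s := add_pos_of_pos_of_nonneg (hg_pos s hs.le) hsg'
  have hsol' := hΦ.hasDerivAt_of_rightInvOn hΦ0 hmaps hinv hξ hΦ' hD.ne'
  have hξK1 : HasDerivAt (fun x => x * K1 x) (K1 ξ + ξ * k') ξ :=
    ((hasDerivAt_id' ξ).mul hk').congr_deriv (by ring)
  have hξK1_eq : (fun x => x * K1 x) =ᶠ[𝓝 ξ] sol := by
    filter_upwards [eventually_gt_nhds hξ] with x hx
    rw [hK1 x hx.le, mul_one_div, div_eq_iff (hg_pos _ (hsol x hx.le).1).ne', (hsol x hx.le).2]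
  rw [← (hsol'.congr_of_eventuallyEq hξK1_eq).unique hξK1, hK1 ξ hξ.le, one_div]
  exact div_add_one_mul_inv_le_inv_add hθ.le (hg_pos s hs.le) hsg'
    ((mul_assoc θ s _).symm.trans_le (hG2 s hs))

/-- Under conditions (G1) and (G2), the pointwise estimate
`K1(ξ) + ξ·K1'(ξ) ≥ (θ/(θ+1))·K1(ξ)` for every `ξ > 0`, the key estimate behind the
strict monotonicity on bounded sets of `F(y) = K1(|y|)y`. -/
theorem K1_add_mul_deriv_ge
    (g g' sol K1 : ℝ → ℝ) (θ : ℝ)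
    -- condition (G1)
    (hg_cont : ContinuousOn g (Set.Ici 0))
    (hg_deriv : ∀ s, 0 < s → HasDerivAt g (g' s) s)
    (hg'_cont : ContinuousOn g' (Set.Ioi 0))
    (hg'_nonneg : ∀ s, 0 < s → 0 ≤ g' s)
    (hg0 : 0 < g 0)
    -- condition (G2)
    (hθ : 0 < θ)
    (hG2 : ∀ s, 0 < s → θ * s * g' s ≤ g s)
    -- the implicit function s(ξ): the unique nonnegative solution of s·g(s) = ξ
    (hsol : ∀ ξ, 0 ≤ ξ → (0 ≤ sol ξ ∧ sol ξ * g (sol ξ) = ξ))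
    -- the Forchheimer coefficient
    (hK1 : ∀ ξ, 0 ≤ ξ → K1 ξ = 1 / g (sol ξ)) :
    ∀ ξ, 0 < ξ → ∀ k', HasDerivAt K1 k' ξ →
      θ / (θ + 1) * K1 ξ ≤ K1 ξ + ξ * k' :=
  K1_add_mul_deriv_ge_general g g' sol K1 θ hg_cont hg_deriv hg'_nonneg hg0 hθ hG2 hsol hK1
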